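/- Let V be an optimal computer and let T be a real with T ≥ 1. Then for every enumeration p₁, p₂, … of Dom V, the partial energies E_k(T) = Z_k(T)^{−1} Σ_{i=1}^k |p_i| 2^{−|p_i|/T} tend to ∞ and the partial entropies S_k(T) = (E_k(T) − F_k(T))/T tend to ∞ as k → ∞, where Z_k(T) = Σ_{i=1}^k 2^{−|p_i|/T} and F_k(T) = −T log₂ Z_k(T). -/

import Mathlib

/-!
For `T ≥ 1` the term `|q| 2^(-|q|/T)` dominates `|q| 2^(-|q|)`, and `n ↦ n 2^(-n)` decreases on
`n ≥ 1`. An optimal `V` simulates with some overhead `d` the computer that is the identity on the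
prefix-free codes `1ᵐ 0 s` with `|s| = 2 ^ m`; the simulating programs are distinct, so
`Σ_{q ∈ Dom V} |q| 2^(-|q|/T)` is at least `2^(-d)` times the same sum at `T = 1` over the codes,
in which the `2 ^ 2 ^ m` codes of length `m + 1 + 2 ^ m` alone contribute at least `1/2`.
So the numerators of the partial energies diverge. Along an enumeration the lengths tend to
infinity, so all but finitely many terms of `Z_k(T)` are at most `|p_i| 2^(-|p_i|/T) / (2c)`, and
the partial energies eventually exceed `c`. The entropy is `E_k(T) / T + log₂ Z_k(T)`, and
`Z_k(T)` increases with `k`.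
-/

open Filter Topology

/-- A set of finite binary strings is prefix-free if no string in it is a
proper prefix of another string in it. -/
def PrefixFree (S : Set (List Bool)) : Prop :=
  ∀ p ∈ S, ∀ q ∈ S, p <+: q → p = q

/-- A computer: a partial recursive function from finite binary strings to
finite binary strings whose domain is a nonempty prefix-free set. -/
structure Computer where
  f : List Bool →. List Bool
  partrec : Partrec f
  dom_nonempty : f.Dom.Nonempty
  dom_prefixFree : PrefixFree f.Dom

/-- A computer `U` is optimal if for each computer `C` there is `d ∈ ℕ` such
that every `p ∈ Dom C` admits `q` with `U(q) = C(p)` and `|q| ≤ |p| + d`. -/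
def Optimal (U : Computer) : Prop :=
  ∀ C : Computer, ∃ d : ℕ, ∀ p ∈ C.f.Dom,
    ∃ q : List Bool, U.f q = C.f p ∧ q.length ≤ p.length + d

/-- `H_C(s)`: the length of a shortest program for `C` printing `s`. -/
noncomputable def complexity (C : Computer) (s : List Bool) : ℕ :=
  sInf {n | ∃ p : List Bool, s ∈ C.f p ∧ p.length = n}

/-- The `i`-th bit (for `i = 0, 1, 2, …`) of the base-two expansion of
`α - ⌊α⌋` with infinitely many zeros. -/
noncomputable def bitOf (α : ℝ) (i : ℕ) : Bool :=
  decide (⌊(α - ⌊α⌋) * 2 ^ (i + 1)⌋ % 2 = 1)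

/-- `α↾n`: the first `n` bits of the base-two expansion of `α - ⌊α⌋`
with infinitely many zeros. -/
noncomputable def firstBits (α : ℝ) (n : ℕ) : List Bool :=
  (List.range n).map (bitOf α)

/-- A real `α` is computable if some total recursive `f : ℕ⁺ → ℚ` satisfies
`|α - f n| < 1/n` for all `n ≥ 1`. -/
def ComputableReal (α : ℝ) : Prop :=
  ∃ f : ℕ → ℚ, Computable f ∧ ∀ n : ℕ, 0 < n → |α - (f n : ℝ)| < 1 / n

/-- `α` is weakly Chaitin `T`-random (w.r.t. the computer `U`). -/
def WeaklyChaitinTRandom (U : Computer) (T α : ℝ) : Prop :=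
  ∃ c : ℕ, ∀ n : ℕ, 0 < n → T * n - c ≤ (complexity U (firstBits α n) : ℝ)

/-- `α` is Chaitin `T`-random (w.r.t. the computer `U`). -/
def ChaitinTRandom (U : Computer) (T α : ℝ) : Prop :=
  Tendsto (fun n : ℕ => (complexity U (firstBits α n) : ℝ) - T * n) atTop atTop

/-- `α` is `T`-compressible (w.r.t. the computer `U`): `H(α↾n) ≤ Tn + o(n)`. -/
def TCompressible (U : Computer) (T α : ℝ) : Prop :=
  ∃ g : ℕ → ℝ, Tendsto (fun n : ℕ => g n / n) atTop (nhds 0) ∧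
    ∀ n : ℕ, 0 < n → (complexity U (firstBits α n) : ℝ) ≤ T * n + g n

/-- The Boltzmann factor `2^(-|p|/T)` of a program `p`. -/
noncomputable def boltzmann (T : ℝ) (p : List Bool) : ℝ :=
  (2 : ℝ) ^ (-(p.length : ℝ) / T)

/-- Partition function `Z_C(T) = Σ_{p ∈ Dom C} 2^(-|p|/T)`. -/
noncomputable def Zfun (C : Computer) (T : ℝ) : ℝ :=
  ∑' p : C.f.Dom, boltzmann T p.1

/-- Free energy `F_C(T) = -T log₂ Z_C(T)`. -/
noncomputable def Ffun (C : Computer) (T : ℝ) : ℝ :=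
  -T * Real.logb 2 (Zfun C T)

/-- Energy `E_C(T) = Z_C(T)⁻¹ Σ_{p ∈ Dom C} |p| 2^(-|p|/T)`. -/
noncomputable def Efun (C : Computer) (T : ℝ) : ℝ :=
  (Zfun C T)⁻¹ * ∑' p : C.f.Dom, (p.1.length : ℝ) * boltzmann T p.1

/-- Statistical mechanical entropy `S_C(T) = (E_C(T) - F_C(T))/T`. -/
noncomputable def Sfun (C : Computer) (T : ℝ) : ℝ :=
  (Efun C T - Ffun C T) / T

/-- `𝒵(V)`: the set of `T ∈ (0,1)` with `Z_V(T)` computable. -/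
def setZ (V : Computer) : Set ℝ := {T | T ∈ Set.Ioo 0 1 ∧ ComputableReal (Zfun V T)}

/-- `ℱ(V)`: the set of `T ∈ (0,1)` with `F_V(T)` computable. -/
def setF (V : Computer) : Set ℝ := {T | T ∈ Set.Ioo 0 1 ∧ ComputableReal (Ffun V T)}

/-- `ℰ(V)`: the set of `T ∈ (0,1)` with `E_V(T)` computable. -/
def setE (V : Computer) : Set ℝ := {T | T ∈ Set.Ioo 0 1 ∧ ComputableReal (Efun V T)}

/-- `𝒮(V)`: the set of `T ∈ (0,1)` with `S_V(T)` computable. -/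
def setS (V : Computer) : Set ℝ := {T | T ∈ Set.Ioo 0 1 ∧ ComputableReal (Sfun V T)}

/-- `FP_w` (w.r.t. the optimal computer `U` fixing `H`): the set of `T ∈ (0,1)`
that are weakly Chaitin `T`-random and `T`-compressible. -/
def FPw (U : Computer) : Set ℝ :=
  {T | T ∈ Set.Ioo 0 1 ∧ WeaklyChaitinTRandom U T T ∧ TCompressible U T T}

/-- `FP` (w.r.t. the optimal computer `U` fixing `H`): the set of `T ∈ (0,1)`
that are Chaitin `T`-random and `T`-compressible. -/
def FP (U : Computer) : Set ℝ :=
  {T | T ∈ Set.Ioo 0 1 ∧ ChaitinTRandom U T T ∧ TCompressible U T T}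

/-- A computer is physically reasonable if its domain contains two strings of
different lengths. -/
def PhysicallyReasonable (C : Computer) : Prop :=
  ∃ p ∈ C.f.Dom, ∃ q ∈ C.f.Dom, p.length ≠ q.length

/-- A computable measure machine: `Z_C(1)` is a computable real. -/
def ComputableMeasureMachine (C : Computer) : Prop :=
  ComputableReal (Zfun C 1)

/-- `D` is the composition `C₀ ⊘ C₁ ⊘ ⋯ ⊘ C_{N-1}`: its domain consists of the
concatenations `p₀p₁⋯p_{N-1}` with each `pᵢ ∈ Dom Cᵢ`, and on such a
concatenation it returns `C₀(p₀)`. -/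
def IsComposition {N : ℕ} (C : Fin N → Computer) (hN : 0 < N) (D : Computer) : Prop :=
  (∀ l, l ∈ D.f.Dom ↔
      ∃ ps : Fin N → List Bool, (∀ i, ps i ∈ (C i).f.Dom) ∧ l = (List.ofFn ps).flatten) ∧
  (∀ ps : Fin N → List Bool, (∀ i, ps i ∈ (C i).f.Dom) →
      D.f ((List.ofFn ps).flatten) = (C ⟨0, hN⟩).f (ps ⟨0, hN⟩))

/-- A sequence of computers is recursive if a single partial recursive function
uniformly computes all of them. -/
def RecursiveSeq (V : ℕ → Computer) : Prop :=
  ∃ F : ℕ × List Bool →. List Bool, Partrec F ∧ ∀ n p, (V n).f p = F (n, p)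

theorem PrefixFree.nil_notMem {S : Set (List Bool)} (hS : PrefixFree S) {p q : List Bool}
    (hp : p ∈ S) (hq : q ∈ S) (hpq : p ≠ q) : [] ∉ S := fun h =>
  hpq ((hS [] h p hp List.nil_prefix).symm.trans (hS [] h q hq List.nil_prefix))

theorem boltzmann_pos (T : ℝ) (p : List Bool) : 0 < boltzmann T p :=
  Real.rpow_pos_of_pos two_pos _

theorem boltzmann_one (p : List Bool) : boltzmann 1 p = (2 ^ p.length)⁻¹ := by
  simp [boltzmann, Real.rpow_neg, Real.rpow_natCast]

theorem boltzmann_one_le {T : ℝ} (hT : 1 ≤ T) (p : List Bool) :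
    boltzmann 1 p ≤ boltzmann T p :=
  Real.rpow_le_rpow_of_exponent_le one_le_two <| by
    rw [div_one, neg_div]
    exact neg_le_neg (div_le_self (Nat.cast_nonneg _) hT)

theorem antitoneOn_natCast_div_two_pow :
    AntitoneOn (fun n : ℕ => (n : ℝ) / 2 ^ n) (Set.Ici 1) :=
  antitoneOn_nat_Ici_of_succ_le fun n hn => by
    rw [div_le_div_iff₀ (by positivity) (by positivity), pow_succ]
    have : (n : ℝ) + 1 ≤ n * 2 := by norm_cast; omega
    push_cast
    nlinarith [pow_pos (two_pos : (0 : ℝ) < 2) n]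

theorem natCast_div_two_pow_div_two_pow_le {m n d : ℕ} (hn : 1 ≤ n) (hnm : n ≤ m + d) :
    (m : ℝ) / 2 ^ m / 2 ^ d ≤ n / 2 ^ n :=
  calc (m : ℝ) / 2 ^ m / 2 ^ d = m / 2 ^ (m + d) := by rw [div_div, pow_add]
    _ ≤ ((m + d : ℕ) : ℝ) / 2 ^ (m + d) := by gcongr; exact_mod_cast Nat.le_add_right m d
    _ ≤ n / 2 ^ n := antitoneOn_natCast_div_two_pow hn (by simp only [Set.mem_Ici]; omega) hnm

namespace CodeComputer

def code (m : ℕ) (s : List Bool) : List Bool :=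
  List.replicate m true ++ false :: s

theorem idxOf_code (m : ℕ) (s : List Bool) : (code m s).idxOf false = m := by
  induction m with
  | zero => simp [code]
  | succ m ih =>
    rw [code, List.replicate_succ, List.cons_append,
      List.idxOf_cons_ne _ (by decide : true ≠ false), ← code, ih]

theorem length_code (m : ℕ) (s : List Bool) : (code m s).length = m + 1 + s.length := by
  simp [code]; ring

theorem code_inj {m m' : ℕ} {s s' : List Bool} : code m s = code m' s' ↔ m = m' ∧ s = s' := by
  refine ⟨fun h => ?_, fun ⟨hm, hs⟩ => hm ▸ hs ▸ rfl⟩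
  obtain rfl : m = m' := by simpa only [idxOf_code] using congrArg (List.idxOf false) h
  simpa [code] using h

/-- `l` has the form `1ᵐ 0 s` with `|s| = 2 ^ m` iff `|l| = m + 1 + 2 ^ m` for `m` the position of
its first `0` (with `m = |l|` if there is none). -/
def decode (l : List Bool) : Option (List Bool) :=
  if l.length = l.idxOf false + 1 + 2 ^ l.idxOf false then some l else none

theorem primrec_decode : Primrec decode := by
  have hidx : Primrec fun l : List Bool => l.idxOf false :=
    Primrec.list_idxOf.comp (Primrec.const false) Primrec.id
  have hpow : Primrec₂ ((· ^ ·) : ℕ → ℕ → ℕ) := Primrec₂.unpaired'.1 Nat.Primrec.pow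
  have hrhs : Primrec fun l : List Bool => l.idxOf false + 1 + 2 ^ l.idxOf false :=
    Primrec.nat_add.comp (Primrec.nat_add.comp hidx (Primrec.const 1))
      (hpow.comp (Primrec.const 2) hidx)
  exact Primrec.ite (PrimrecRel.comp Primrec.eq Primrec.list_length hrhs)
    (Primrec.option_some.comp Primrec.id) (Primrec.const none)

theorem dom_decode_iff (l : List Bool) :
    (Part.ofOption (decode l)).Dom ↔ l.length = l.idxOf false + 1 + 2 ^ l.idxOf false := by
  unfold decode
  split_ifs with h <;> simp [h]

theorem prefixFree_dom_decode : PrefixFree {l | (Part.ofOption (decode l)).Dom} := by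
  rintro a ha b hb ⟨t, rfl⟩
  rw [Set.mem_ofPred_eq, dom_decode_iff] at ha hb
  have hmem : false ∈ a :=
    List.idxOf_lt_length_iff.1 (by have := Nat.two_pow_pos (a.idxOf false); omega)
  rw [List.idxOf_append_of_mem hmem, List.length_append] at hb
  rw [List.length_eq_zero_iff.1 (show t.length = 0 by omega), List.append_nil]

end CodeComputer

open CodeComputer in
def codeComputer : Computer where
  f l := Part.ofOption (decode l)
  partrec := Computable.ofOption primrec_decode.to_comp
  dom_nonempty := ⟨[false, true], (dom_decode_iff _).2 (by decide)⟩
  dom_prefixFree := prefixFree_dom_decode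

namespace CodeComputer

theorem code_mem_dom {m : ℕ} {s : List Bool} (hs : s.length = 2 ^ m) :
    code m s ∈ codeComputer.f.Dom := by
  show (Part.ofOption (decode (code m s))).Dom
  rw [dom_decode_iff, idxOf_code, length_code, hs]

theorem codeComputer_f_eq {l : List Bool} (hl : l ∈ codeComputer.f.Dom) :
    codeComputer.f l = Part.some l := by
  change (Part.ofOption (decode l)).Dom at hl
  rw [dom_decode_iff] at hl
  simp [codeComputer, decode, hl]

theorem codeComputer_injOn : ∀ p ∈ codeComputer.f.Dom, ∀ p' ∈ codeComputer.f.Dom,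
    codeComputer.f p = codeComputer.f p' → p = p' := fun _ hp _ hp' h =>
  Part.some_injective <| by rwa [← codeComputer_f_eq hp, ← codeComputer_f_eq hp']

theorem not_summable_length_mul_boltzmann_one :
    ¬ Summable fun p : codeComputer.f.Dom => (p.1.length : ℝ) * boltzmann 1 p.1 := by
  intro h
  let ι : (Σ m : ℕ, List.Vector Bool (2 ^ m)) → codeComputer.f.Dom :=
    fun x => ⟨code x.1 x.2.toList, code_mem_dom x.2.toList_length⟩
  have hι : Function.Injective ι := by
    rintro ⟨m, s⟩ ⟨m', s'⟩ hx
    obtain ⟨rfl, hs⟩ := code_inj.1 (congrArg Subtype.val hx)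
    simp only at hs
    rw [List.Vector.toList_injective hs]
  have hfib : ∀ m : ℕ, 1 / 2 ≤ ∑' s : List.Vector Bool (2 ^ m),
      ((ι ⟨m, s⟩).1.length : ℝ) * boltzmann 1 (ι ⟨m, s⟩).1 := by
    intro m
    simp only [ι, boltzmann_one, length_code, List.Vector.toList_length, tsum_fintype,
      Finset.sum_const, Finset.card_univ, card_vector, Fintype.card_bool, nsmul_eq_mul]
    push_cast
    field_simp
    calc (2 : ℝ) ^ (m + 1 + 2 ^ m) = 2 * 2 ^ 2 ^ m * 2 ^ m := by ring
      _ ≤ 2 * 2 ^ 2 ^ m * (m + 1 + 2 ^ m) := by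
        gcongr
        linarith [(m.cast_nonneg : (0 : ℝ) ≤ m)]
  obtain ⟨m, hm⟩ := ((h.comp_injective hι).sigma.tendsto_atTop_zero.eventually
    (gt_mem_nhds (by norm_num : (0 : ℝ) < 1 / 2))).exists
  exact (hfib m).not_gt hm

end CodeComputer

theorem Optimal.summable_length_mul_boltzmann_one {V : Computer} (hV : Optimal V)
    (hnil : [] ∉ V.f.Dom) {T : ℝ} (hT : 1 ≤ T) {C : Computer}
    (hC : ∀ p ∈ C.f.Dom, ∀ p' ∈ C.f.Dom, C.f p = C.f p' → p = p')
    (hsum : Summable fun q : V.f.Dom => (q.1.length : ℝ) * boltzmann T q.1) :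
    Summable fun p : C.f.Dom => (p.1.length : ℝ) * boltzmann 1 p.1 := by
  obtain ⟨d, hd⟩ := hV C
  choose q hqC hqlen using fun p : C.f.Dom => hd p.1 p.2
  have hqdom : ∀ p, q p ∈ V.f.Dom := fun p => by
    show (V.f (q p)).Dom
    rw [hqC]
    exact p.2
  let φ : C.f.Dom → V.f.Dom := fun p => ⟨q p, hqdom p⟩
  have hφ : Function.Injective φ := fun a b hab => Subtype.ext <|
    hC _ a.2 _ b.2 (by rw [← hqC, ← hqC]; exact congrArg (V.f ·.1) hab)
  refine (summable_mul_right_iff (a := ((2 : ℝ) ^ d)⁻¹) (by positivity)).1 <|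
    (hsum.comp_injective hφ).of_nonneg_of_le (fun p =>
    mul_nonneg (mul_nonneg (Nat.cast_nonneg _) (boltzmann_pos _ _).le) (by positivity)) fun p => ?_
  have hq1 : 1 ≤ (q p).length :=
    List.length_pos_iff.2 fun h => hnil (h ▸ hqdom p)
  calc (p.1.length : ℝ) * boltzmann 1 p.1 * (2 ^ d)⁻¹
      ≤ (q p).length * boltzmann 1 (q p) := by
        simpa only [boltzmann_one, ← div_eq_mul_inv] using
          natCast_div_two_pow_div_two_pow_le hq1 (hqlen p)
    _ ≤ (q p).length * boltzmann T (q p) := by gcongr; exact boltzmann_one_le hT _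

theorem Optimal.not_summable_length_mul_boltzmann {V : Computer} (hV : Optimal V)
    (hnil : [] ∉ V.f.Dom) {T : ℝ} (hT : 1 ≤ T) :
    ¬ Summable fun q : V.f.Dom => (q.1.length : ℝ) * boltzmann T q.1 := fun h =>
  CodeComputer.not_summable_length_mul_boltzmann_one <|
    hV.summable_length_mul_boltzmann_one hnil hT CodeComputer.codeComputer_injOn h

theorem tendsto_length_atTop_of_injective {p : ℕ → List Bool} (hp : Function.Injective p) :
    Tendsto (fun i => (p i).length) atTop atTop := by
  refine (tendsto_atTop.2 fun n => ?_).mono_left Nat.cofinite_eq_atTop.ge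
  exact ((List.finite_length_lt Bool n).preimage hp.injOn).eventually_cofinite_notMem.mono
    fun _ hi => not_lt.1 hi

section WeightedMean

open Finset

theorem tendsto_inv_sum_mul_sum_atTop {w ℓ : ℕ → ℝ} (hw : ∀ i, 0 ≤ w i)
    (hℓ : Tendsto ℓ atTop atTop)
    (hN : Tendsto (fun k => ∑ i ∈ range k, ℓ i * w i) atTop atTop) :
    Tendsto (fun k => (∑ i ∈ range k, w i)⁻¹ * ∑ i ∈ range k, ℓ i * w i)
      atTop atTop := by
  refine tendsto_atTop.2 fun b => ?_
  set c := max b 1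
  have hc : 0 < c := lt_max_of_lt_right one_pos
  obtain ⟨n₀, hn₀⟩ := eventually_atTop.1 (hℓ.eventually_ge_atTop (2 * c))
  filter_upwards [hN.eventually_ge_atTop
      (2 * c * ∑ i ∈ range n₀, w i - ∑ i ∈ range n₀, ℓ i * w i),
    hN.eventually_gt_atTop 0, eventually_ge_atTop n₀] with k hk hpos hkn
  have hZpos : 0 < ∑ i ∈ range k, w i := by
    refine (sum_nonneg fun i _ => hw i).lt_of_ne fun hZ => hpos.ne' ?_
    rw [eq_comm, sum_eq_zero_iff_of_nonneg fun i _ => hw i] at hZ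
    exact sum_eq_zero fun i hi => by rw [hZ i hi, mul_zero]
  have htail : ∑ i ∈ Ico n₀ k, w i ≤ (∑ i ∈ Ico n₀ k, ℓ i * w i) / (2 * c) := by
    rw [sum_div]
    refine sum_le_sum fun i hi => ?_
    rw [le_div_iff₀ (by positivity), mul_comm]
    exact mul_le_mul_of_nonneg_right (hn₀ i (mem_Ico.1 hi).1) (hw i)
  refine (le_max_left b 1).trans ?_
  rw [le_inv_mul_iff₀ hZpos, ← sum_range_add_sum_Ico _ hkn, ← sum_range_add_sum_Ico _ hkn]
  rw [← sum_range_add_sum_Ico _ hkn] at hk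
  rw [le_div_iff₀ (by positivity)] at htail
  linarith

end WeightedMean

theorem tendsto_entropy_atTop {E Z : ℕ → ℝ} {T : ℝ} (hT : 0 < T)
    (hE : Tendsto E atTop atTop) (hZ : Monotone Z) {k₀ : ℕ} (hZ₀ : 0 < Z k₀) :
    Tendsto (fun k => (E k - (-T * Real.logb 2 (Z k))) / T) atTop atTop := by
  refine tendsto_atTop_mono' atTop ?_
    ((tendsto_atTop_add_const_right _ (T * Real.logb 2 (Z k₀)) hE).atTop_div_const hT)
  filter_upwards [eventually_ge_atTop k₀] with k hk
  have := Real.logb_le_logb_of_le one_lt_two hZ₀ (hZ hk)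
  gcongr
  nlinarith

/-- For optimal `V` and `T ≥ 1`, for every enumeration of `Dom V`
the partial energies `E_k(T)` and partial entropies `S_k(T)` tend to `∞`. -/
theorem energy_entropy_diverge (V : Computer) (hV : Optimal V)
    (T : ℝ) (hT : 1 ≤ T) (p : ℕ → List Bool)
    (hinj : Function.Injective p) (hran : Set.range p = V.f.Dom) :
    Tendsto (fun k : ℕ =>
        (∑ i ∈ Finset.range k, boltzmann T (p i))⁻¹ *
          ∑ i ∈ Finset.range k, ((p i).length : ℝ) * boltzmann T (p i)) atTop atTop ∧
    Tendsto (fun k : ℕ =>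
        ((∑ i ∈ Finset.range k, boltzmann T (p i))⁻¹ *
            (∑ i ∈ Finset.range k, ((p i).length : ℝ) * boltzmann T (p i)) -
          (-T * Real.logb 2 (∑ i ∈ Finset.range k, boltzmann T (p i)))) / T)
      atTop atTop := by
  have hmem : ∀ i, p i ∈ V.f.Dom := fun i => hran ▸ Set.mem_range_self i
  have hnil : [] ∉ V.f.Dom :=
    V.dom_prefixFree.nil_notMem (hmem 0) (hmem 1) (hinj.ne zero_ne_one)
  have hnum : Tendsto (fun k => ∑ i ∈ Finset.range k, ((p i).length : ℝ) * boltzmann T (p i))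
      atTop atTop := by
    rw [← not_summable_iff_tendsto_nat_atTop_of_nonneg fun i =>
      mul_nonneg (Nat.cast_nonneg _) (boltzmann_pos T _).le]
    exact fun h => hV.not_summable_length_mul_boltzmann hnil hT <|
      ((Equiv.ofInjective p hinj).trans (Equiv.setCongr hran)).summable_iff.1 h
  have henergy := tendsto_inv_sum_mul_sum_atTop (fun i => (boltzmann_pos T (p i)).le)
    (tendsto_natCast_atTop_atTop.comp (tendsto_length_atTop_of_injective hinj)) hnum
  refine ⟨henergy, tendsto_entropy_atTop (by linarith) henergy ?_ (k₀ := 1) ?_⟩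
  · exact monotone_nat_of_le_succ fun k => by
      rw [Finset.sum_range_succ]
      exact le_add_of_nonneg_right (boltzmann_pos T _).le
  · simpa using boltzmann_pos T (p 0)
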